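/- arXiv:2102.08590 — 2 statements merged into one kernel-verified Lean document; each statement's English description precedes it below -/
import Mathlib

section
/- Let C and D be triangulated categories, R : D → C an exact functor, T an exact autoequivalence of D and C₂ an exact autoequivalence of C such that there is a natural isomorphism R∘T ≅ C₂∘R. Let G be a split-generator of D such that R G is a split-generator of C. Then for every t ∈ ℝ and every n ≥ 1 one has δ_t(R G, C₂ⁿ(R G)) ≤ δ_t(G, Tⁿ G), and consequently limsup_{n→∞} (1/n)·log δ_t(R G, C₂ⁿ(R G)) ≤ limsup_{n→∞} (1/n)·log δ_t(G, Tⁿ G). (This is the lower bound h_t(T_S) ≥ h_t(C_S[2]) of Theorem 1.7(1), for a spherical functor S with right adjoint R, twist T = T_S and C₂ = C_S[2], using R∘T_S ≅ (C_S[2])∘R.) -/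
open CategoryTheory CategoryTheory.Limits CategoryTheory.Pretriangulated Filter
open scoped ENNReal

universe v₁ v₂ u₁ u₂

variable {D : Type u₁} [Category.{v₁} D] [Preadditive D] [HasZeroObject D]
  [HasShift D ℤ] [∀ n : ℤ, (shiftFunctor D n).Additive] [Pretriangulated D]

/-- An object `F` admits a cone decomposition with the given list of components. -/
inductive ConeDecomp : D → List D → Prop
  | nil {F : D} (h : IsZero F) : ConeDecomp F []
  | step {X : D} (F : D) {l : List D} (A : D) (hX : ConeDecomp X l)
      (f : X ⟶ F) (g : F ⟶ A) (h : A ⟶ X⟦(1 : ℤ)⟧)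
      (ht : Triangle.mk f g h ∈ distTriang D) : ConeDecomp F (l ++ [A])

open scoped Classical in
/-- The categorical complexity `δ_t(E,F)`. -/
noncomputable def catDelta [HasBinaryBiproducts D] (t : ℝ) (E F : D) : ℝ≥0∞ :=
  if IsZero F then 0
  else sInf {x : ℝ≥0∞ | ∃ (ns : List ℤ) (F' : D),
      ns ≠ [] ∧ ConeDecomp (F ⊞ F') (ns.map fun n => E⟦n⟧) ∧
      x = (ns.map fun n => ENNReal.ofReal (Real.exp ((n : ℝ) * t))).sum}

/-- Objects split-generated by `G`. -/
inductive SplitGen (G : D) : D → Prop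
  | self : SplitGen G G
  | zero {X : D} (h : IsZero X) : SplitGen G X
  | ofIso {X Y : D} (e : X ≅ Y) (h : SplitGen G X) : SplitGen G Y
  | shift {X : D} (n : ℤ) (h : SplitGen G X) : SplitGen G (X⟦n⟧)
  | cone₂ {X Y Z : D} (f : X ⟶ Y) (g : Y ⟶ Z) (h : Z ⟶ X⟦(1 : ℤ)⟧)
      (ht : Triangle.mk f g h ∈ distTriang D) (hX : SplitGen G X) (hZ : SplitGen G Z) :
      SplitGen G Y
  | summand {X Y : D} (s : X ⟶ Y) (p : Y ⟶ X) (hsp : s ≫ p = 𝟙 X)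
      (h : SplitGen G Y) : SplitGen G X

/-- `G` is a split-generator. -/
def IsSplitGenerator (G : D) : Prop := ∀ X : D, SplitGen G X

/-!
An exact functor `R` carries a cone decomposition of `F ⊕ F'` with components `E[nᵢ]` to one
of `R F ⊕ R F'` with components `(R E)[nᵢ]`, since it preserves distinguished triangles,
biproducts and commutes with shifts; hence `δ_t(R E, R F) ≤ δ_t(E, F)`. Iterating
`R ∘ T ≅ C₂ ∘ R` gives `R (Tⁿ G) ≅ C₂ⁿ (R G)`, which yields the inequality for each `n`, and the
growth rates compare because `log` and multiplication by `1/n ≥ 0` are monotone.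
-/

lemma nonempty_iterate_iso {A B : Type*} [Category A] [Category B] {R : A ⥤ B} {T : A ⥤ A}
    {S : B ⥤ B} (e : T ⋙ R ≅ R ⋙ S) (n : ℕ) (X : A) :
    Nonempty (R.obj ((T.obj)^[n] X) ≅ (S.obj)^[n] (R.obj X)) := by
  induction n with
  | zero => exact ⟨Iso.refl _⟩
  | succ n ih =>
    obtain ⟨i⟩ := ih
    rw [Function.iterate_succ_apply', Function.iterate_succ_apply']
    exact ⟨e.app _ ≪≫ S.mapIso i⟩

lemma distinguished_mk_of_iso {X Y Y' Z Z' : D} {f : X ⟶ Y} {g : Y ⟶ Z} {h : Z ⟶ X⟦(1 : ℤ)⟧}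
    (hT : Triangle.mk f g h ∈ distTriang D) (eY : Y ≅ Y') (eZ : Z ≅ Z') :
    Triangle.mk (f ≫ eY.hom) (eY.inv ≫ g ≫ eZ.hom) (eZ.inv ≫ h) ∈ distTriang D :=
  isomorphic_distinguished _ hT _ <| Triangle.isoMk _ _ (Iso.refl X) eY.symm eZ.symm
    (by simp : (f ≫ eY.hom) ≫ eY.inv = 𝟙 X ≫ f)
    (by simp : (eY.inv ≫ g ≫ eZ.hom) ≫ eZ.inv = eY.inv ≫ g)
    (by simp : (eZ.inv ≫ h) ≫ (shiftFunctor D 1).map (𝟙 X) = eZ.inv ≫ h)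

variable {C : Type u₂} [Category.{v₂} C] [Preadditive C] [HasZeroObject C] [HasShift C ℤ]
  [∀ n : ℤ, (shiftFunctor C n).Additive] [Pretriangulated C]

namespace ConeDecomp

lemma of_iso {F F' : D} {l : List D} (h : ConeDecomp F l) (e : F ≅ F') : ConeDecomp F' l := by
  cases h with
  | nil hF => exact nil (hF.of_iso e.symm)
  | step _ A hX _ _ _ hT => exact step _ _ hX _ _ _ (distinguished_mk_of_iso hT e (Iso.refl A))

lemma of_iso_components {ι : Type*} {φ ψ : ι → D} (e : ∀ i, φ i ≅ ψ i) {F : D} {ns : List ι}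
    (h : ConeDecomp F (ns.map φ)) : ConeDecomp F (ns.map ψ) := by
  generalize hl : ns.map φ = l at h
  induction h generalizing ns with
  | nil hF =>
    obtain rfl : ns = [] := List.map_eq_nil_iff.mp hl
    exact nil hF
  | step F _ _ _ _ _ hT ih =>
    obtain ⟨ns', ns'', rfl, rfl, hA⟩ := List.map_eq_append_iff.mp hl
    obtain ⟨i, rfl, rfl⟩ := List.map_eq_singleton_iff.mp hA
    rw [List.map_append, List.map_singleton]
    exact step _ _ (ih rfl) _ _ _ (distinguished_mk_of_iso hT (Iso.refl F) (e i))

lemma map (R : D ⥤ C) [R.CommShift ℤ] [R.IsTriangulated] {F : D} {l : List D}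
    (h : ConeDecomp F l) : ConeDecomp (R.obj F) (l.map R.obj) := by
  induction h with
  | nil hF => exact nil (R.map_isZero hF)
  | step _ _ _ f g δ hT ih =>
    rw [List.map_append, List.map_singleton]
    exact step _ _ ih (R.map f) (R.map g) (R.map δ ≫ (R.commShiftIso (1 : ℤ)).hom.app _)
      (R.map_distinguished _ hT)

end ConeDecomp

lemma catDelta_le_of_map_iso [HasBinaryBiproducts D] [HasBinaryBiproducts C]
    (R : D ⥤ C) [R.CommShift ℤ] [R.IsTriangulated] (t : ℝ) (E : D) {F : D} {F' : C}
    (e : R.obj F ≅ F') : catDelta t (R.obj E) F' ≤ catDelta t E F := by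
  classical
  have := preservesBinaryBiproducts_of_preservesBinaryProducts R
  unfold catDelta
  by_cases hF' : IsZero F'
  · simp [hF']
  have hF : ¬ IsZero F := fun hF => hF' ((R.map_isZero hF).of_iso e.symm)
  rw [if_neg hF, if_neg hF']
  refine sInf_le_sInf ?_
  rintro x ⟨ns, F₀, hns, hdec, rfl⟩
  refine ⟨ns, R.obj F₀, hns, ?_, rfl⟩
  have hRdec := hdec.map R
  rw [List.map_map] at hRdec
  exact (hRdec.of_iso_components fun n => (R.commShiftIso n).app E).of_iso
    (R.mapBiprod F F₀ ≪≫ biprod.mapIso e (Iso.refl _))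

/-- Theorem 1.7(1) (lower bound): `h_t(T_S) ≥ h_t(C_S[2])`, via `R ∘ T ≅ C₂ ∘ R`. -/
theorem twist_entropy_lower_bound
    {C : Type u₂} [Category.{v₂} C] [Preadditive C] [HasZeroObject C] [HasShift C ℤ]
    [∀ n : ℤ, (shiftFunctor C n).Additive] [Pretriangulated C] [HasBinaryBiproducts C]
    [HasBinaryBiproducts D]
    (R : D ⥤ C) [R.CommShift ℤ] [R.IsTriangulated]
    (T : D ⥤ D) [T.CommShift ℤ] [T.IsTriangulated] [T.IsEquivalence]
    (C₂ : C ⥤ C) [C₂.CommShift ℤ] [C₂.IsTriangulated] [C₂.IsEquivalence]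
    (e : T ⋙ R ≅ R ⋙ C₂)
    (G : D) (hG : IsSplitGenerator G) (hRG : IsSplitGenerator (R.obj G)) (t : ℝ) :
    (∀ n : ℕ, 1 ≤ n →
      catDelta t (R.obj G) ((C₂.obj)^[n] (R.obj G)) ≤ catDelta t G ((T.obj)^[n] G)) ∧
    limsup (fun n : ℕ => ((n : ℝ)⁻¹ : EReal) *
        ENNReal.log (catDelta t (R.obj G) ((C₂.obj)^[n] (R.obj G)))) atTop ≤
      limsup (fun n : ℕ => ((n : ℝ)⁻¹ : EReal) *
        ENNReal.log (catDelta t G ((T.obj)^[n] G))) atTop := by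
  have hδ (n : ℕ) :
      catDelta t (R.obj G) ((C₂.obj)^[n] (R.obj G)) ≤ catDelta t G ((T.obj)^[n] G) :=
    catDelta_le_of_map_iso R t G (nonempty_iterate_iso e n G).some
  refine ⟨fun n _ => hδ n, limsup_le_limsup (Eventually.of_forall fun n => ?_)⟩
  exact mul_le_mul_of_nonneg_left (ENNReal.log_monotone (hδ n))
    (EReal.coe_nonneg.mpr (by positivity))
end

section
/- Let E, E', E'' be objects of a triangulated category D and t ∈ ℝ. Then δ_t(E, E' ⊕ E'') ≤ δ_t(E,E') + δ_t(E,E'') (inequality in [0,∞]). -/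
/-!
Cone decompositions can be added: if `E' ⊕ F₁` and `E'' ⊕ F₂` decompose with components
`l₁` and `l₂`, then adding `E' ⊕ F₁` to every stage of the second decomposition (the direct sum
of a distinguished triangle with a contractible one is again distinguished) decomposes
`(E' ⊕ F₁) ⊕ (E'' ⊕ F₂) ≅ (E' ⊕ E'') ⊕ (F₁ ⊕ F₂)` with components `l₁ ++ l₂`, whose cost is the
sum of the two costs. Taking infima gives the inequality; when `E'` or `E''` is zero it is
invariance of `δ_t` under isomorphism.
-/

open CategoryTheory CategoryTheory.Limits CategoryTheory.Pretriangulated Filter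
open scoped ENNReal

universe v₁ v₂ u₁ u₂

variable {D : Type u₁} [Category.{v₁} D] [Preadditive D] [HasZeroObject D]
  [HasShift D ℤ] [∀ n : ℤ, (shiftFunctor D n).Additive] [Pretriangulated D]

noncomputable def biprodBiprodInterchange {C : Type*} [Category C] [HasZeroMorphisms C]
    [HasBinaryBiproducts C] (A B X Y : C) : (A ⊞ B) ⊞ (X ⊞ Y) ≅ (A ⊞ X) ⊞ (B ⊞ Y) where
  hom := biprod.lift
    (biprod.lift (biprod.fst ≫ biprod.fst) (biprod.snd ≫ biprod.fst))
    (biprod.lift (biprod.fst ≫ biprod.snd) (biprod.snd ≫ biprod.snd))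
  inv := biprod.lift
    (biprod.lift (biprod.fst ≫ biprod.fst) (biprod.snd ≫ biprod.fst))
    (biprod.lift (biprod.fst ≫ biprod.snd) (biprod.snd ≫ biprod.snd))
  hom_inv_id := by ext <;> simp
  inv_hom_id := by ext <;> simp

noncomputable def biprodIsoPiWalkingPair {C : Type*} [Category C] [HasZeroMorphisms C]
    (f : WalkingPair → C) [HasBinaryBiproduct (f .left) (f .right)] [HasProduct f] :
    f .left ⊞ f .right ≅ ∏ᶜ f where
  hom := Pi.lift fun | .left => biprod.fst | .right => biprod.snd
  inv := biprod.lift (Pi.π f .left) (Pi.π f .right)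
  hom_inv_id := by ext <;> simp
  inv_hom_id := by ext ⟨_ | _⟩ <;> simp

lemma biprod_distinguished (T₁ T₂ : Triangle D)
    (hT₁ : T₁ ∈ distTriang D) (hT₂ : T₂ ∈ distTriang D) :
    Triangle.mk (biprod.map T₁.mor₁ T₂.mor₁) (biprod.map T₁.mor₂ T₂.mor₂)
      (biprod.desc (T₁.mor₃ ≫ biprod.inl⟦(1 : ℤ)⟧') (T₂.mor₃ ≫ biprod.inr⟦(1 : ℤ)⟧')) ∈
      distTriang D := by
  let T : WalkingPair → Triangle D := fun
    | .left => T₁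
    | .right => T₂
  refine isomorphic_distinguished _
    (productTriangle_distinguished T (by rintro (_ | _) <;> assumption)) _ ?_
  refine Triangle.isoMk _ _ (biprodIsoPiWalkingPair fun j => (T j).obj₁)
    (biprodIsoPiWalkingPair fun j => (T j).obj₂) (biprodIsoPiWalkingPair fun j => (T j).obj₃)
    ?_ ?_ ?_
  all_goals dsimp [Triangle.mk, productTriangle]
  · apply limit.hom_ext
    rintro ⟨_ | _⟩ <;> simp [biprodIsoPiWalkingPair, T]
  · apply limit.hom_ext
    rintro ⟨_ | _⟩ <;> simp [biprodIsoPiWalkingPair, T]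
  · rw [← cancel_mono (piComparison (shiftFunctor D (1 : ℤ)) fun j => (T j).obj₁)]
    dsimp [biprodIsoPiWalkingPair]
    rw [Category.assoc, Category.assoc, Category.assoc, IsIso.inv_hom_id, Category.comp_id,
      map_lift_piComparison]
    apply limit.hom_ext
    rintro ⟨_ | _⟩ <;> ext <;> simp [T, ← Functor.map_comp]

open ZeroObject in
lemma biprod_left_distinguished (X : D) {Z Y A : D} {f : Z ⟶ Y} {g : Y ⟶ A}
    {h : A ⟶ Z⟦(1 : ℤ)⟧} (hT : Triangle.mk f g h ∈ distTriang D) :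
    Triangle.mk (biprod.map (𝟙 X) f) (biprod.snd ≫ g) (h ≫ biprod.inr⟦(1 : ℤ)⟧') ∈
      distTriang D := by
  have hsum : Triangle.mk (biprod.map (𝟙 X) f) (biprod.map (0 : X ⟶ 0) g)
      (biprod.desc (0 ≫ biprod.inl⟦(1 : ℤ)⟧') (h ≫ biprod.inr⟦(1 : ℤ)⟧')) ∈ distTriang D :=
    biprod_distinguished _ _ (contractible_distinguished X) hT
  refine isomorphic_distinguished _ hsum _ ?_
  refine Triangle.isoMk _ _ (Iso.refl _) (Iso.refl _) (isoZeroBiprod (isZero_zero D)) ?_ ?_ ?_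
  all_goals dsimp [Triangle.mk]
  · simp
  · ext <;> simp
  · simp

lemma ConeDecomp.ofIso {F G : D} {l : List D} (e : F ≅ G) (h : ConeDecomp F l) :
    ConeDecomp G l := by
  cases h with
  | nil h => exact .nil (h.of_iso e.symm)
  | step F A hX f g hc ht =>
    refine .step G A hX (f ≫ e.hom) (e.inv ≫ g) hc (isomorphic_distinguished _ ht _ ?_)
    exact Triangle.isoMk _ _ (Iso.refl _) e.symm (Iso.refl _) (by simp [Triangle.mk])
      (by simp [Triangle.mk]) (by simp [Triangle.mk])

lemma ConeDecomp.biprod {X Y : D} {l m : List D} (hX : ConeDecomp X l) (hY : ConeDecomp Y m) :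
    ConeDecomp (X ⊞ Y) (l ++ m) := by
  induction hY with
  | nil h => simpa using hX.ofIso (isoBiprodZero h)
  | step _ A _ _ _ _ ht ih =>
    rw [← List.append_assoc]
    exact .step _ A ih _ _ _ (biprod_left_distinguished X ht)

section catDelta

variable {t : ℝ} {E F : D}

lemma catDelta_of_isZero (hF : IsZero F) : catDelta t E F = 0 := by
  simp [catDelta, hF]

lemma catDelta_of_not_isZero (hF : ¬IsZero F) :
    catDelta t E F = sInf {x : ℝ≥0∞ | ∃ (ns : List ℤ) (F' : D),
      ns ≠ [] ∧ ConeDecomp (F ⊞ F') (ns.map fun n => E⟦n⟧) ∧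
      x = (ns.map fun n => ENNReal.ofReal (Real.exp ((n : ℝ) * t))).sum} := by
  simp [catDelta, hF]

lemma catDelta_le_of_coneDecomp {ns : List ℤ} {F' : D} (hns : ns ≠ [])
    (h : ConeDecomp (F ⊞ F') (ns.map fun n => E⟦n⟧)) :
    catDelta t E F ≤ (ns.map fun n => ENNReal.ofReal (Real.exp ((n : ℝ) * t))).sum := by
  by_cases hF : IsZero F
  · simp [catDelta_of_isZero hF]
  · rw [catDelta_of_not_isZero hF]
    exact sInf_le ⟨ns, F', hns, h, rfl⟩

lemma catDelta_le_of_iso {G : D} (e : F ≅ G) : catDelta t E G ≤ catDelta t E F := by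
  by_cases hF : IsZero F
  · rw [catDelta_of_isZero hF, catDelta_of_isZero (hF.of_iso e.symm)]
  · rw [catDelta_of_not_isZero hF]
    refine le_sInf ?_
    rintro _ ⟨ns, F', hns, h, rfl⟩
    exact catDelta_le_of_coneDecomp hns (h.ofIso (biprod.mapIso e (Iso.refl F')))

end catDelta

theorem catDelta_biprod_le_general (E E' E'' : D) (t : ℝ) :
    catDelta t E (E' ⊞ E'') ≤ catDelta t E E' + catDelta t E E'' := by
  by_cases h' : IsZero E'
  · rw [catDelta_of_isZero h', zero_add]
    exact catDelta_le_of_iso (isoZeroBiprod h')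
  by_cases h'' : IsZero E''
  · rw [catDelta_of_isZero h'', add_zero]
    exact catDelta_le_of_iso (isoBiprodZero h'')
  rw [catDelta_of_not_isZero h', catDelta_of_not_isZero h'', sInf_eq_iInf, sInf_eq_iInf]
  refine ENNReal.le_iInf₂_add_iInf₂ ?_
  rintro _ ⟨ns₁, F₁, hns₁, h₁, rfl⟩ _ ⟨ns₂, F₂, -, h₂, rfl⟩
  have h : ConeDecomp ((E' ⊞ E'') ⊞ (F₁ ⊞ F₂)) ((ns₁ ++ ns₂).map fun n => E⟦n⟧) := by
    rw [List.map_append]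
    exact (h₁.biprod h₂).ofIso (biprodBiprodInterchange E' F₁ E'' F₂)
  simpa using catDelta_le_of_coneDecomp (by simp [hns₁]) h

/-- Lemma 2.2(2): `δ_t(E, E' ⊕ E'') ≤ δ_t(E,E') + δ_t(E,E'')`. -/
theorem catDelta_biprod_le [HasBinaryBiproducts D] (E E' E'' : D) (t : ℝ) :
    catDelta t E (E' ⊞ E'') ≤ catDelta t E E' + catDelta t E E'' :=
  catDelta_biprod_le_general E E' E'' t
end
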